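/- Let j be a positive natural number and let μ be a finite positive Borel measure on ℝ whose support is an infinite set, with μ({0}) = 0. Assume that the (real) polynomials are dense in L²(ℝ, μ) and that the polynomials are also dense in L²(ℝ, x^{2j} dμ(x)). Then the linear span of the monomials {x^n : n ≥ j} is dense in L²(ℝ, μ). -/

import Mathlib

open MeasureTheory Polynomial Filter Topology Set

noncomputable section

def msupport (μ : Measure ℝ) : Set ℝ := {x : ℝ | ∀ U ∈ nhds x, μ U ≠ 0}

def PolyDense (μ : Measure ℝ) : Prop :=
  ∀ f : ℝ → ℝ, MemLp f 2 μ → ∀ ε : ℝ, 0 < ε →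
    ∃ p : Polynomial ℝ, eLpNorm (fun x => f x - p.eval x) 2 μ < ENNReal.ofReal ε

/-! If `x^j` vanishes only on a `μ`-null set, `f ↦ f / x^j` is an isometry of `L²(μ)` onto
`L²(x^(2j) dμ)`, inverse to multiplication by `x^j`. So approximating `f / x^j` by a polynomial
`q` in `L²(x^(2j) dμ)` approximates `f` by `q · x^j` in `L²(μ)`, and `q · x^j` has no monomials
of degree `< j`. -/

section WeightedL2

variable {μ : Measure ℝ} {φ : ℝ → ℝ}

lemma eLpNorm_two_withDensity_sq (hφ : Measurable φ) (h : ℝ → ℝ) :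
    eLpNorm h 2 (μ.withDensity fun x => ENNReal.ofReal (φ x ^ 2))
      = eLpNorm (fun x => h x * φ x) 2 μ := by
  rw [eLpNorm_eq_lintegral_rpow_enorm_toReal two_ne_zero ENNReal.ofNat_ne_top,
    eLpNorm_eq_lintegral_rpow_enorm_toReal two_ne_zero ENNReal.ofNat_ne_top,
    lintegral_withDensity_eq_lintegral_mul_non_measurable _
      (by fun_prop) (Eventually.of_forall fun x => ENNReal.ofReal_lt_top)]
  congr 1
  refine lintegral_congr fun x => ?_
  simp only [Pi.mul_apply, ENNReal.toReal_ofNat, ENNReal.rpow_two, Real.enorm_eq_ofReal_abs]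
  rw [← ENNReal.ofReal_pow (abs_nonneg _), ← ENNReal.ofReal_pow (abs_nonneg _),
    ← ENNReal.ofReal_mul (sq_nonneg _), abs_mul, mul_pow, sq_abs, sq_abs, mul_comm]

lemma memLp_div_withDensity_sq (hφ : Measurable φ) (hφ0 : ∀ᵐ x ∂μ, φ x ≠ 0) {f : ℝ → ℝ}
    (hf : MemLp f 2 μ) :
    MemLp (fun x => f x / φ x) 2 (μ.withDensity fun x => ENNReal.ofReal (φ x ^ 2)) := by
  have hmeas : AEStronglyMeasurable (fun x => f x / φ x) μ :=
    (hf.aestronglyMeasurable.aemeasurable.div hφ.aemeasurable).aestronglyMeasurable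
  refine ⟨hmeas.mono_ac (withDensity_absolutelyContinuous μ _), ?_⟩
  rw [eLpNorm_two_withDensity_sq hφ]
  refine (eLpNorm_congr_ae ?_).trans_lt hf.2
  filter_upwards [hφ0] with x hx
  simp only [div_mul_cancel₀ (f x) hx]

lemma PolyDense.exists_eLpNorm_sub_mul_lt
    (hd : PolyDense (μ.withDensity fun x => ENNReal.ofReal (φ x ^ 2)))
    (hφ : Measurable φ) (hφ0 : ∀ᵐ x ∂μ, φ x ≠ 0) {f : ℝ → ℝ} (hf : MemLp f 2 μ)
    {ε : ℝ} (hε : 0 < ε) :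
    ∃ q : ℝ[X], eLpNorm (fun x => f x - q.eval x * φ x) 2 μ < ENNReal.ofReal ε := by
  obtain ⟨q, hq⟩ := hd _ (memLp_div_withDensity_sq hφ hφ0 hf) ε hε
  rw [eLpNorm_two_withDensity_sq hφ] at hq
  refine ⟨q, (eLpNorm_congr_ae ?_).trans_lt hq⟩
  filter_upwards [hφ0] with x hx
  rw [sub_mul, div_mul_cancel₀ (f x) hx]

end WeightedL2

theorem algebraic_vs_analytic_main_general
    (j : ℕ)
    (μ : Measure ℝ)
    (h0 : μ {0} = 0)
    (hdenseW : PolyDense (μ.withDensity fun x => ENNReal.ofReal (x ^ (2 * j)))) :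
    ∀ f : ℝ → ℝ, MemLp f 2 μ → ∀ ε : ℝ, 0 < ε →
      ∃ p : Polynomial ℝ, (∀ k < j, p.coeff k = 0) ∧
        eLpNorm (fun x => f x - p.eval x) 2 μ < ENNReal.ofReal ε := by
  intro f hf ε hε
  have hpow0 : ∀ᵐ x ∂μ, x ^ j ≠ 0 := by
    filter_upwards [measure_eq_zero_iff_ae_notMem.mp h0] with x hx
    exact pow_ne_zero j hx
  simp_rw [pow_mul'] at hdenseW
  obtain ⟨q, hq⟩ := hdenseW.exists_eLpNorm_sub_mul_lt (measurable_id.pow_const j) hpow0 hf hε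
  refine ⟨q * X ^ j, fun k hk => ?_, ?_⟩
  · rw [coeff_mul_X_pow', if_neg (by omega)]
  · simpa only [eval_mul, eval_pow, eval_X] using hq

/-- **Theorem 1.1.** Let `j ≥ 1` and let `μ` be a finite positive Borel measure on `ℝ` with
infinite support and `μ({0}) = 0`.  If polynomials are dense in `L²(μ)` and in
`L²(x^(2j) dμ)`, then the linear span of the monomials `{x^n : n ≥ j}` (i.e. the polynomials
whose coefficients of degree `< j` all vanish) is dense in `L²(μ)`. -/
theorem algebraic_vs_analytic_main
    (j : ℕ) (hj : 0 < j)
    (μ : Measure ℝ) [IsFiniteMeasure μ]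
    (hsupp : (msupport μ).Infinite)
    (h0 : μ {0} = 0)
    (hdense : PolyDense μ)
    (hdenseW : PolyDense (μ.withDensity fun x => ENNReal.ofReal (x ^ (2 * j)))) :
    ∀ f : ℝ → ℝ, MemLp f 2 μ → ∀ ε : ℝ, 0 < ε →
      ∃ p : Polynomial ℝ, (∀ k < j, p.coeff k = 0) ∧
        eLpNorm (fun x => f x - p.eval x) 2 μ < ENNReal.ofReal ε :=
  algebraic_vs_analytic_main_general j μ h0 hdenseW
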